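/- The fractional Fourier transform of the normalised Gaussian is the normalised Gaussian: ℱ_θ φ = φ for every θ ∈ ℝ, where φ(t) = 2^{1/4} e^{-πt²}. -/
import Mathlib

open MeasureTheory Complex Real Classical


private lemma frft_gauss_aux (θ : ℝ) (hs : Real.sin θ ≠ 0) (ξ : ℝ) :
    ((1 : ℂ) - Complex.I * (Real.cot θ : ℂ)) ^ ((1:ℂ)/2) *
      Complex.exp ((π:ℂ) * Complex.I * (ξ:ℂ)^2 * (Real.cot θ : ℂ)) *
      ∫ t : ℝ, (((2:ℝ)^((1:ℝ)/4) * Real.exp (-π*t^2) : ℝ) : ℂ) *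
          Complex.exp ((π:ℂ) * Complex.I * (t:ℂ)^2 * (Real.cot θ : ℂ)) *
        Complex.exp (-2*(π:ℂ)*Complex.I*(t:ℂ)*(ξ:ℂ) / (Real.sin θ : ℂ))
      = (((2:ℝ)^((1:ℝ)/4) * Real.exp (-π*ξ^2) : ℝ) : ℂ) := by
  set A : ℝ := (2:ℝ)^((1:ℝ)/4) with hA
  set s : ℂ := (Real.sin θ : ℂ) with hsdef
  have hs' : s ≠ 0 := by rw [hsdef]; exact_mod_cast hs
  set C : ℂ := (Real.cot θ : ℂ) with hC
  have hCs : C = (Real.cos θ : ℂ) / s := by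
    rw [hC, hsdef, Real.cot_eq_cos_div_sin]; push_cast; ring
  set b : ℂ := -(π:ℂ) * (1 - Complex.I * C) with hb
  set c : ℂ := -2*(π:ℂ)*Complex.I*(ξ:ℂ) / s with hc
  have hπ : (π:ℂ) ≠ 0 := by exact_mod_cast Real.pi_ne_zero
  have hre1 : ((1:ℂ) - Complex.I * C).re = 1 := by
    rw [hC]
    simp only [Complex.sub_re, Complex.one_re, Complex.mul_re, Complex.I_re,
      Complex.I_im, Complex.ofReal_re, Complex.ofReal_im]
    ring
  have hbre : b.re < 0 := by
    have : b.re = -π := by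
      rw [hb, hC]
      simp only [Complex.neg_re, Complex.neg_im, Complex.mul_re, Complex.ofReal_re,
        Complex.ofReal_im, Complex.sub_re, Complex.sub_im, Complex.one_re, Complex.one_im,
        Complex.mul_im, Complex.I_re, Complex.I_im]
      ring
    rw [this]
    linarith [Real.pi_pos]
  have hz : (1 : ℂ) - Complex.I * C ≠ 0 := by
    intro h
    rw [h] at hre1
    simp at hre1
  have hint : (∫ t : ℝ, ((A * Real.exp (-π*t^2) : ℝ) : ℂ) *
          Complex.exp ((π:ℂ) * Complex.I * (t:ℂ)^2 * C) *
        Complex.exp (-2*(π:ℂ)*Complex.I*(t:ℂ)*(ξ:ℂ) / s))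
      = (A:ℂ) * (((π:ℂ) / -b) ^ ((1:ℂ)/2) * Complex.exp (0 - c^2 / (4*b))) := by
    rw [← integral_cexp_quadratic hbre c 0, ← integral_const_mul]
    congr 1; funext t
    push_cast
    rw [mul_assoc, mul_assoc, ← Complex.exp_add, ← Complex.exp_add]
    congr 1
    rw [hb, hc]
    ring
  rw [hint]
  have h1 : ((π:ℂ) / -b) ^ ((1:ℂ)/2) = ((1 - Complex.I * C)⁻¹) ^ ((1:ℂ)/2) := by
    congr 1
    rw [hb]
    field_simp
  have h2 : ((1:ℂ) - Complex.I * C) ^ ((1:ℂ)/2) * ((1 - Complex.I * C)⁻¹) ^ ((1:ℂ)/2) = 1 := by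
    rw [Complex.inv_cpow _ _ ?_, mul_inv_cancel₀]
    · exact fun h => hz ((Complex.cpow_eq_zero_iff _ _).mp h).1
    · intro h
      rw [Complex.arg_eq_pi_iff, hre1] at h
      linarith [h.1]
  have hsc : s^2 + (Real.cos θ : ℂ)^2 = 1 := by
    rw [hsdef]
    exact_mod_cast congrArg (Complex.ofReal) (Real.sin_sq_add_cos_sq θ)
  have hCsq : ((1:ℂ) - Complex.I * C) * (1 + Complex.I * C) = 1/s^2 := by
    calc ((1:ℂ) - Complex.I * C) * (1 + Complex.I * C)
        = 1 - Complex.I^2 * ((Real.cos θ:ℂ)^2/s^2) := by rw [hCs]; ring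
      _ = 1 + (Real.cos θ:ℂ)^2/s^2 := by rw [Complex.I_sq]; ring
      _ = (s^2 + (Real.cos θ:ℂ)^2)/s^2 := by field_simp
      _ = 1/s^2 := by rw [hsc]
  have h4b : (4:ℂ)*b ≠ 0 := by
    apply mul_ne_zero (by norm_num)
    rw [hb]
    exact mul_ne_zero (neg_ne_zero.mpr hπ) hz
  have hc2 : c^2 = -4*(π:ℂ)^2*(ξ:ℂ)^2/s^2 := by
    rw [hc, div_pow, show (-2*(π:ℂ)*Complex.I*(ξ:ℂ))^2 = -4*(π:ℂ)^2*(ξ:ℂ)^2 by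
      linear_combination (4*(π:ℂ)^2*(ξ:ℂ)^2)*Complex.I_sq]
  have key : c^2 = ((π:ℂ)*(ξ:ℂ)^2 + (π:ℂ)*Complex.I*(ξ:ℂ)^2*C) * (4*b) := by
    calc c^2 = -4*(π:ℂ)^2*(ξ:ℂ)^2/s^2 := hc2
      _ = -4*(π:ℂ)^2*(ξ:ℂ)^2*(1/s^2) := by ring
      _ = -4*(π:ℂ)^2*(ξ:ℂ)^2*(((1:ℂ) - Complex.I * C) * (1 + Complex.I * C)) := by rw [hCsq]
      _ = ((π:ℂ)*(ξ:ℂ)^2 + (π:ℂ)*Complex.I*(ξ:ℂ)^2*C) * (4*b) := by rw [hb]; ring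
  have h3 : (0:ℂ) - c^2/(4*b) = -(π:ℂ)*(ξ:ℂ)^2 - (π:ℂ)*Complex.I*(ξ:ℂ)^2*C := by
    rw [key, mul_div_assoc, div_self h4b]
    ring
  rw [h1, h3]
  push_cast
  rw [show ((1:ℂ)-Complex.I*C)^((1:ℂ)/2) * Complex.exp ((π:ℂ)*Complex.I*(ξ:ℂ)^2*C) *
      ((A:ℂ) * (((1-Complex.I*C)⁻¹)^((1:ℂ)/2) *
        Complex.exp (-(π:ℂ)*(ξ:ℂ)^2 - (π:ℂ)*Complex.I*(ξ:ℂ)^2*C)))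
    = (((1:ℂ)-Complex.I*C)^((1:ℂ)/2) * ((1-Complex.I*C)⁻¹)^((1:ℂ)/2)) *
      (Complex.exp ((π:ℂ)*Complex.I*(ξ:ℂ)^2*C) *
        Complex.exp (-(π:ℂ)*(ξ:ℂ)^2 - (π:ℂ)*Complex.I*(ξ:ℂ)^2*C)) * (A:ℂ) from by ring,
    h2, ← Complex.exp_add, one_mul]
  rw [show (π:ℂ)*Complex.I*(ξ:ℂ)^2*C + (-(π:ℂ)*(ξ:ℂ)^2 - (π:ℂ)*Complex.I*(ξ:ℂ)^2*C)
    = -(π:ℂ)*(ξ:ℂ)^2 from by ring]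
  ring


/-- The fractional Fourier transform. For `θ ∉ πℤ`,
`ℱ_θ f(ξ) = c_θ e^{πiξ²cotθ} ∫ f(t) e^{πit²cotθ} e^{-2πitξ/sinθ} dt`, where `c_θ` is the
square root of `1 - i cot θ` with positive real part; `ℱ_{2kπ} f = f` and
`ℱ_{(2k+1)π} f(ξ) = f(-ξ)`. -/
noncomputable def frft (θ : ℝ) (f : ℝ → ℂ) : ℝ → ℂ :=
  if ∃ k : ℤ, θ = 2*k*π then f
  else if ∃ k : ℤ, θ = (2*k+1)*π then (fun ξ => f (-ξ))
  else fun ξ : ℝ =>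
    ((1 : ℂ) - Complex.I * (Real.cot θ : ℂ)) ^ ((1:ℂ)/2) *
      Complex.exp ((π:ℂ) * Complex.I * (ξ:ℂ)^2 * (Real.cot θ : ℂ)) *
      ∫ t : ℝ, f t * Complex.exp ((π:ℂ) * Complex.I * (t:ℂ)^2 * (Real.cot θ : ℂ)) *
        Complex.exp (-2*(π:ℂ)*Complex.I*(t:ℂ)*(ξ:ℂ) / (Real.sin θ : ℂ))

theorem stmt17 (θ : ℝ) :
    ∀ ξ : ℝ,
      frft θ (fun t : ℝ => (((2:ℝ)^((1:ℝ)/4) * Real.exp (-π*t^2) : ℝ) : ℂ)) ξ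
        = (((2:ℝ)^((1:ℝ)/4) * Real.exp (-π*ξ^2) : ℝ) : ℂ) := by
  intro ξ
  unfold frft
  split_ifs with h1 h2
  · rfl
  · norm_num
  · have hs : Real.sin θ ≠ 0 := by
      rw [Real.sin_ne_zero_iff]
      intro n hn
      rcases Int.even_or_odd n with ⟨m, hm⟩ | ⟨m, hm⟩
      · exact h1 ⟨m, by rw [← hn, hm]; push_cast; ring⟩
      · exact h2 ⟨m, by rw [← hn, hm]; push_cast; ring⟩
    exact frft_gauss_aux θ hs ξ
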